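/- If ρ is a two-qubit density matrix such that for every 4×4 unitary matrix U there exist 2×2 density matrices σ and τ with U ρ U† = σ ⊗ₖ τ, then ρ = (1/4)·I₄. (The only two-qubit state that is absolutely a product state — equivalently, whose super quantum discord vanishes absolutely — is the maximally mixed state.) -/
import Mathlib


open Matrix
open scoped Kronecker ComplexOrder

def IsDensityMatrix {n : Type*} [Fintype n] [DecidableEq n] (ρ : Matrix n n ℂ) : Prop :=
  ρ.PosSemidef ∧ ρ.trace = 1

namespace AbsProd

noncomputable def c : ℂ := ((Real.sqrt 2)⁻¹ : ℝ)

lemma hc : c * c = 1/2 := by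
  unfold c
  norm_cast
  rw [← mul_inv, Real.mul_self_sqrt (by norm_num)]
  norm_num

lemma hc2 : c ^ 2 = 1/2 := by rw [sq]; exact hc

lemma hsc : (starRingEnd ℂ) c = c := by unfold c; exact Complex.conj_ofReal _

/-- rotation by 45° in the plane of basis vectors `i` and `j`. -/
noncomputable def rot (i j : Fin 2 × Fin 2) : Matrix (Fin 2 × Fin 2) (Fin 2 × Fin 2) ℂ :=
  Matrix.of fun a b =>
    if a = i ∧ b = i then c else if a = i ∧ b = j then c
    else if a = j ∧ b = i then c else if a = j ∧ b = j then -c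
    else if a = b then 1 else 0

lemma rot1_mem : rot (0,0) (1,1) ∈ Matrix.unitaryGroup (Fin 2 × Fin 2) ℂ := by
  rw [Matrix.mem_unitaryGroup_iff]
  ext ⟨a, b⟩ ⟨a', b'⟩
  fin_cases a <;> fin_cases b <;> fin_cases a' <;> fin_cases b' <;>
    simp [Matrix.mul_apply, Fintype.sum_prod_type, Fin.sum_univ_two, rot,
      Matrix.conjTranspose_apply, Matrix.one_apply, Prod.ext_iff, hsc] <;>
    ring_nf <;> simp [hc2, hsc]

lemma rot2_mem : rot (0,1) (1,0) ∈ Matrix.unitaryGroup (Fin 2 × Fin 2) ℂ := by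
  rw [Matrix.mem_unitaryGroup_iff]
  ext ⟨a, b⟩ ⟨a', b'⟩
  fin_cases a <;> fin_cases b <;> fin_cases a' <;> fin_cases b' <;>
    simp [Matrix.mul_apply, Fintype.sum_prod_type, Fin.sum_univ_two, rot,
      Matrix.conjTranspose_apply, Matrix.one_apply, Prod.ext_iff, hsc] <;>
    ring_nf <;> simp [hc2, hsc]

lemma rot3_mem : rot (0,0) (0,1) ∈ Matrix.unitaryGroup (Fin 2 × Fin 2) ℂ := by
  rw [Matrix.mem_unitaryGroup_iff]
  ext ⟨a, b⟩ ⟨a', b'⟩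
  fin_cases a <;> fin_cases b <;> fin_cases a' <;> fin_cases b' <;>
    simp [Matrix.mul_apply, Fintype.sum_prod_type, Fin.sum_univ_two, rot,
      Matrix.conjTranspose_apply, Matrix.one_apply, Prod.ext_iff, hsc] <;>
    ring_nf <;> simp [hc2, hsc]

lemma diag_conj (V : Matrix (Fin 2 × Fin 2) (Fin 2 × Fin 2) ℂ) (d : (Fin 2 × Fin 2) → ℂ)
    (p : Fin 2 × Fin 2) :
    (V * Matrix.diagonal d * Vᴴ) p p = ∑ k, V p k * star (V p k) * d k := by
  simp [Matrix.mul_apply, Matrix.diagonal, Matrix.conjTranspose_apply, Finset.mul_sum]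
  congr 1; ext k; ring

lemma rot1_diag (d : (Fin 2 × Fin 2) → ℂ) :
    (rot (0,0) (1,1) * Matrix.diagonal d * (rot (0,0) (1,1))ᴴ) (0,0) (0,0)
        = (d (0,0) + d (1,1))/2
    ∧ (rot (0,0) (1,1) * Matrix.diagonal d * (rot (0,0) (1,1))ᴴ) (0,1) (0,1) = d (0,1)
    ∧ (rot (0,0) (1,1) * Matrix.diagonal d * (rot (0,0) (1,1))ᴴ) (1,0) (1,0) = d (1,0)
    ∧ (rot (0,0) (1,1) * Matrix.diagonal d * (rot (0,0) (1,1))ᴴ) (1,1) (1,1)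
        = (d (0,0) + d (1,1))/2 := by
  refine ⟨?_, ?_, ?_, ?_⟩ <;> rw [diag_conj] <;>
    simp [rot, Fintype.sum_prod_type, Fin.sum_univ_two, hsc, Prod.ext_iff] <;>
    linear_combination (d (0,0) + d (1,1)) * hc

lemma rot2_diag (d : (Fin 2 × Fin 2) → ℂ) :
    (rot (0,1) (1,0) * Matrix.diagonal d * (rot (0,1) (1,0))ᴴ) (0,0) (0,0) = d (0,0)
    ∧ (rot (0,1) (1,0) * Matrix.diagonal d * (rot (0,1) (1,0))ᴴ) (0,1) (0,1)
        = (d (0,1) + d (1,0))/2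
    ∧ (rot (0,1) (1,0) * Matrix.diagonal d * (rot (0,1) (1,0))ᴴ) (1,0) (1,0)
        = (d (0,1) + d (1,0))/2
    ∧ (rot (0,1) (1,0) * Matrix.diagonal d * (rot (0,1) (1,0))ᴴ) (1,1) (1,1) = d (1,1) := by
  refine ⟨?_, ?_, ?_, ?_⟩ <;> rw [diag_conj] <;>
    simp [rot, Fintype.sum_prod_type, Fin.sum_univ_two, hsc, Prod.ext_iff] <;>
    linear_combination (d (0,1) + d (1,0)) * hc

lemma rot3_diag (d : (Fin 2 × Fin 2) → ℂ) :
    (rot (0,0) (0,1) * Matrix.diagonal d * (rot (0,0) (0,1))ᴴ) (0,0) (0,0)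
        = (d (0,0) + d (0,1))/2
    ∧ (rot (0,0) (0,1) * Matrix.diagonal d * (rot (0,0) (0,1))ᴴ) (0,1) (0,1)
        = (d (0,0) + d (0,1))/2
    ∧ (rot (0,0) (0,1) * Matrix.diagonal d * (rot (0,0) (0,1))ᴴ) (1,0) (1,0) = d (1,0)
    ∧ (rot (0,0) (0,1) * Matrix.diagonal d * (rot (0,0) (0,1))ᴴ) (1,1) (1,1) = d (1,1) := by
  refine ⟨?_, ?_, ?_, ?_⟩ <;> rw [diag_conj] <;>
    simp [rot, Fintype.sum_prod_type, Fin.sum_univ_two, hsc, Prod.ext_iff] <;>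
    linear_combination (d (0,0) + d (0,1)) * hc

end AbsProd

theorem absolute_product_state (ρ : Matrix (Fin 2 × Fin 2) (Fin 2 × Fin 2) ℂ)
    (hρ : IsDensityMatrix ρ)
    (h : ∀ U ∈ Matrix.unitaryGroup (Fin 2 × Fin 2) ℂ,
      ∃ σ τ : Matrix (Fin 2) (Fin 2) ℂ,
        IsDensityMatrix σ ∧ IsDensityMatrix τ ∧ U * ρ * Uᴴ = σ ⊗ₖ τ) :
    ρ = (1 / 4 : ℂ) • (1 : Matrix (Fin 2 × Fin 2) (Fin 2 × Fin 2) ℂ) := by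
  obtain ⟨hpsd, htr⟩ := hρ
  have hH : ρ.IsHermitian := hpsd.1
  set U : Matrix (Fin 2 × Fin 2) (Fin 2 × Fin 2) ℂ := ((hH.eigenvectorUnitary : Matrix.unitaryGroup (Fin 2 × Fin 2) ℂ) : Matrix (Fin 2 × Fin 2) (Fin 2 × Fin 2) ℂ)
    with hUdef
  have hU : U ∈ Matrix.unitaryGroup (Fin 2 × Fin 2) ℂ := hH.eigenvectorUnitary.2
  set d : (Fin 2 × Fin 2) → ℂ := RCLike.ofReal ∘ hH.eigenvalues with hddef
  have hspec : ρ = U * Matrix.diagonal d * star U := hH.spectral_theorem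
  have hUU : star U * U = 1 := Unitary.star_mul_self_of_mem hU
  have hUU' : U * star U = 1 := Unitary.mul_star_self_of_mem hU
  have key : ∀ V ∈ Matrix.unitaryGroup (Fin 2 × Fin 2) ℂ,
      (V * Matrix.diagonal d * Vᴴ) (0,0) (0,0) * (V * Matrix.diagonal d * Vᴴ) (1,1) (1,1)
      = (V * Matrix.diagonal d * Vᴴ) (0,1) (0,1) * (V * Matrix.diagonal d * Vᴴ) (1,0) (1,0) := by
    intro V hV
    have hW : V * star U ∈ Matrix.unitaryGroup (Fin 2 × Fin 2) ℂ :=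
      mul_mem hV (Unitary.star_mem hU)
    obtain ⟨σ, τ, _, _, hst⟩ := h _ hW
    have cancel : ∀ X : Matrix (Fin 2 × Fin 2) (Fin 2 × Fin 2) ℂ,
        star U * (U * X) = X := fun X => by rw [← Matrix.mul_assoc, hUU, one_mul]
    have hM : V * star U * ρ * (V * star U)ᴴ = V * Matrix.diagonal d * Vᴴ := by
      rw [hspec]
      simp only [← Matrix.star_eq_conjTranspose, StarMul.star_mul, star_star]
      simp only [Matrix.mul_assoc, cancel]
    rw [hM] at hst
    rw [hst]
    simp only [Matrix.kroneckerMap_apply]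
    ring
  have e0 := key 1 (one_mem _)
  have e1 := key _ AbsProd.rot1_mem
  have e2 := key _ AbsProd.rot2_mem
  have e3 := key _ AbsProd.rot3_mem
  rw [Matrix.one_mul, Matrix.conjTranspose_one, Matrix.mul_one] at e0
  simp only [Matrix.diagonal_apply_eq] at e0
  obtain ⟨k1, k2, k3, k4⟩ := AbsProd.rot1_diag d
  rw [k1, k2, k3, k4] at e1
  obtain ⟨k1, k2, k3, k4⟩ := AbsProd.rot2_diag d
  rw [k1, k2, k3, k4] at e2
  obtain ⟨k1, k2, k3, k4⟩ := AbsProd.rot3_diag d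
  rw [k1, k2, k3, k4] at e3
  -- trace condition
  have htrd : d (0,0) + d (0,1) + (d (1,0) + d (1,1)) = 1 := by
    have h1 : (U * Matrix.diagonal d * star U).trace = 1 := by rw [← hspec]; exact htr
    rw [Matrix.trace_mul_cycle, hUU, Matrix.one_mul] at h1
    simpa [Matrix.trace, Matrix.diag, Fintype.sum_prod_type, Fin.sum_univ_two] using h1
  have had : d (0,0) = d (1,1) := by
    have hsq : (d (0,0) - d (1,1))^2 = 0 := by linear_combination 4*e1 - 4*e0
    exact sub_eq_zero.mp ((pow_eq_zero_iff (two_ne_zero)).mp hsq)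
  have hbc : d (0,1) = d (1,0) := by
    have hsq : (d (0,1) - d (1,0))^2 = 0 := by linear_combination 4*e0 - 4*e2
    exact sub_eq_zero.mp ((pow_eq_zero_iff (two_ne_zero)).mp hsq)
  have hsum : d (0,0) + d (0,1) = 1/2 := by
    linear_combination (1/2)*htrd + (1/2)*had + (1/2)*hbc
  have hab : d (0,0) = d (0,1) := by
    have h4 : (d (0,0) + d (0,1)) * (d (0,0) - d (0,1)) = 0 := by
      linear_combination 2*e3 + (d (0,0) + d (0,1))*had - (d (0,0) + d (0,1))*hbc
    rw [hsum] at h4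
    have : d (0,0) - d (0,1) = 0 := by linear_combination 2*h4
    exact sub_eq_zero.mp this
  have ha : d (0,0) = 1/4 := by linear_combination (1/2)*hsum + (1/2)*hab
  have hb : d (0,1) = 1/4 := by linear_combination ha - hab
  have hb' : d (1,0) = 1/4 := by linear_combination ha - hab - hbc
  have ha' : d (1,1) = 1/4 := by linear_combination ha - had
  have hdall : ∀ p : Fin 2 × Fin 2, d p = 1/4 := by
    rintro ⟨p1, p2⟩
    fin_cases p1 <;> fin_cases p2 <;> assumption
  have hDeq : Matrix.diagonal d = (1/4 : ℂ) • (1 : Matrix (Fin 2 × Fin 2) (Fin 2 × Fin 2) ℂ) := by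
    ext p q
    rcases eq_or_ne p q with rfl | hne
    · simp [Matrix.diagonal_apply_eq, Matrix.one_apply_eq, hdall p]
    · simp [Matrix.diagonal_apply_ne _ hne, Matrix.one_apply_ne hne]
  rw [hspec, hDeq]
  rw [Matrix.mul_smul, Matrix.smul_mul, Matrix.mul_one, hUU']
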